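/- Let p be a stochastic tournament on a finite set V with |V| = n ≥ 3 and let ε > 0. Suppose the number of unbalanced unordered triangles of p (3-element subsets {x, y, z} of V with p x y * p y z * p z x ≠ p x z * p z y * p y x) is at most ε * C(n, 3). Then there exists a reversible stochastic tournament p' on V such that the number of unordered pairs {x, y} of distinct vertices with p' x y ≠ p x y is strictly less than ε * C(n, 2). -/

import Mathlib

/-!
Fix a vertex `v` and give every vertex the weight `π x = p v x / p x v` (with `π v = 1`).
The Bradley–Terry tournament `π y / (π x + π y)` is reversible and agrees with `p` on every
pair through `v`, and on every pair `{x, y}` for which the triangle `{v, x, y}` is balanced.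
So it differs from `p` on at most as many pairs as there are unbalanced triangles through `v`.
Averaging over `v`, some vertex lies on at most `3 U / n` of the `U` unbalanced triangles, and
`3 C(n, 3) / n < C(n, 2)`.
-/

open Finset

section

variable {V : Type*}

def IsStochasticTournament (p : V → V → ℝ) : Prop :=
  ∀ x y, x ≠ y → 0 < p x y ∧ p x y < 1 ∧ p x y + p y x = 1

def IsReversible [Fintype V] (p : V → V → ℝ) : Prop :=
  ∃ π : V → ℝ, (∀ x, 0 < π x) ∧ ∑ x, π x = 1 ∧ ∀ x y, x ≠ y → π x * p x y = π y * p y x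

def IsBalanced (p : V → V → ℝ) (x y z : V) : Prop :=
  p x y * p y z * p z x = p x z * p z y * p y x

open Classical in
noncomputable def unbalancedTriangles [Fintype V] [DecidableEq V] (p : V → V → ℝ) :
    Finset (Finset V) :=
  {T | ∃ x y z, x ≠ y ∧ x ≠ z ∧ y ≠ z ∧ T = {x, y, z} ∧ ¬IsBalanced p x y z}

section Triangles

variable [Fintype V] [DecidableEq V] {p : V → V → ℝ} {T : Finset V}

theorem mem_unbalancedTriangles : T ∈ unbalancedTriangles p ↔
    ∃ x y z, x ≠ y ∧ x ≠ z ∧ y ≠ z ∧ T = {x, y, z} ∧ ¬IsBalanced p x y z := by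
  simp [unbalancedTriangles]

theorem card_of_mem_unbalancedTriangles (hT : T ∈ unbalancedTriangles p) : #T = 3 := by
  obtain ⟨x, y, z, hxy, hxz, hyz, rfl, -⟩ := mem_unbalancedTriangles.mp hT
  exact card_eq_three.mpr ⟨x, y, z, hxy, hxz, hyz, rfl⟩

end Triangles

section BradleyTerry

variable (π : V → ℝ)

/-- Every reversible tournament is of this form, with `π` its stationary distribution. -/
noncomputable def bradleyTerry (x y : V) : ℝ := π y / (π x + π y)

variable {π}

theorem mul_bradleyTerry_comm (x y : V) :
    π x * bradleyTerry π x y = π y * bradleyTerry π y x := by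
  simp only [bradleyTerry, add_comm (π y)]
  ring

theorem isStochasticTournament_bradleyTerry (hπ : ∀ x, 0 < π x) :
    IsStochasticTournament (bradleyTerry π) := by
  intro x y _
  have hxy : 0 < π x + π y := add_pos (hπ x) (hπ y)
  refine ⟨div_pos (hπ y) hxy, (div_lt_one hxy).mpr (lt_add_of_pos_left _ (hπ x)), ?_⟩
  rw [bradleyTerry, bradleyTerry, add_comm (π y), ← add_div, add_comm, div_self hxy.ne']

theorem isReversible_bradleyTerry [Fintype V] [Nonempty V] (hπ : ∀ x, 0 < π x) :
    IsReversible (bradleyTerry π) := by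
  have hS : 0 < ∑ x, π x := sum_pos (fun x _ => hπ x) univ_nonempty
  refine ⟨fun x => π x / ∑ x, π x, fun x => div_pos (hπ x) hS, ?_, fun x y _ => ?_⟩
  · rw [← sum_div, div_self hS.ne']
  · simp only [div_mul_eq_mul_div, mul_bradleyTerry_comm x y]

theorem eq_bradleyTerry_of_mul_eq_mul {p : V → V → ℝ} {x y : V} (hπ : ∀ x, 0 < π x)
    (hp : p x y + p y x = 1) (hbal : π x * p x y = π y * p y x) :
    p x y = bradleyTerry π x y := by
  have hxy : 0 < π x + π y := add_pos (hπ x) (hπ y)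
  rw [bradleyTerry, eq_div_iff hxy.ne']
  linear_combination hbal + π y * hp

end BradleyTerry

section StarWeights

variable {p : V → V → ℝ}

/-- Weights for which `p` satisfies detailed balance on every pair through `v`. -/
noncomputable def starWeights [DecidableEq V] (p : V → V → ℝ) (v x : V) : ℝ :=
  if x = v then 1 else p v x / p x v

variable [DecidableEq V]

theorem starWeights_pos (hp : IsStochasticTournament p) (v x : V) : 0 < starWeights p v x := by
  unfold starWeights
  split_ifs with hx
  · exact one_pos
  · exact div_pos (hp v x (Ne.symm hx)).1 (hp x v hx).1

theorem starWeights_mul_eq {v x : V} (hp : IsStochasticTournament p) (hx : x ≠ v) :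
    starWeights p v x * p x v = p v x := by
  rw [starWeights, if_neg hx, div_mul_cancel₀ _ (hp x v hx).1.ne']

theorem bradleyTerry_starWeights_left (hp : IsStochasticTournament p) {v y : V} (hy : y ≠ v) :
    bradleyTerry (starWeights p v) v y = p v y := by
  refine (eq_bradleyTerry_of_mul_eq_mul (starWeights_pos hp v) (hp v y (Ne.symm hy)).2.2 ?_).symm
  rw [starWeights_mul_eq hp hy, starWeights, if_pos rfl, one_mul]

theorem bradleyTerry_starWeights_right (hp : IsStochasticTournament p) {v y : V} (hy : y ≠ v) :
    bradleyTerry (starWeights p v) y v = p y v := by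
  refine (eq_bradleyTerry_of_mul_eq_mul (starWeights_pos hp v) (hp y v hy).2.2 ?_).symm
  rw [starWeights_mul_eq hp hy, starWeights, if_pos rfl, one_mul]

theorem bradleyTerry_starWeights_of_isBalanced (hp : IsStochasticTournament p) {v x y : V}
    (hxy : x ≠ y) (hx : x ≠ v) (hy : y ≠ v) (hbal : IsBalanced p v x y) :
    bradleyTerry (starWeights p v) x y = p x y := by
  refine (eq_bradleyTerry_of_mul_eq_mul (starWeights_pos hp v) (hp x y hxy).2.2 ?_).symm
  have hxv := (hp x v hx).1.ne'
  have hyv := (hp y v hy).1.ne'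
  rw [starWeights, starWeights, if_neg hx, if_neg hy, div_mul_eq_mul_div, div_mul_eq_mul_div,
    div_eq_div_iff hxv hyv]
  exact hbal

theorem not_isBalanced_of_bradleyTerry_starWeights_ne (hp : IsStochasticTournament p)
    {v x y : V} (hxy : x ≠ y) (hne : bradleyTerry (starWeights p v) x y ≠ p x y) :
    x ≠ v ∧ y ≠ v ∧ ¬IsBalanced p v x y := by
  have hx : x ≠ v := by
    rintro rfl
    exact hne (bradleyTerry_starWeights_left hp hxy.symm)
  have hy : y ≠ v := by
    rintro rfl
    exact hne (bradleyTerry_starWeights_right hp hxy)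
  exact ⟨hx, hy, fun hbal => hne (bradleyTerry_starWeights_of_isBalanced hp hxy hx hy hbal)⟩

theorem ncard_bradleyTerry_starWeights_ne_le [Fintype V] (hp : IsStochasticTournament p)
    (v : V) :
    {e : Finset V | ∃ x y, x ≠ y ∧ e = {x, y} ∧ bradleyTerry (starWeights p v) x y ≠ p x y}.ncard
      ≤ #{T ∈ unbalancedTriangles p | v ∈ T} := by
  set S := {e : Finset V | ∃ x y, x ≠ y ∧ e = {x, y} ∧
    bradleyTerry (starWeights p v) x y ≠ p x y}
  have hS : ∀ e ∈ S, v ∉ e ∧ insert v e ∈ {T ∈ unbalancedTriangles p | v ∈ T} := by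
    rintro _ ⟨x, y, hxy, rfl, hne⟩
    obtain ⟨hx, hy, hunbal⟩ := not_isBalanced_of_bradleyTerry_starWeights_ne hp hxy hne
    refine ⟨by simp [hx.symm, hy.symm], mem_filter.mpr ⟨?_, mem_insert_self _ _⟩⟩
    exact mem_unbalancedTriangles.mpr ⟨v, x, y, hx.symm, hy.symm, hxy, rfl, hunbal⟩
  rw [← Set.ncard_coe_finset]
  refine Set.ncard_le_ncard_of_injOn (insert v) (fun e he => (hS e he).2) ?_ (finite_toSet _)
  intro e he f hf hef
  rw [← erase_insert (hS e he).1, hef, erase_insert (hS f hf).1]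

end StarWeights

theorem exists_card_mul_card_filter_mem_le {α : Type*} [Fintype α] [Nonempty α]
    [DecidableEq α] (B : Finset (Finset α)) :
    ∃ v, Fintype.card α * #{T ∈ B | v ∈ T} ≤ ∑ T ∈ B, #T := by
  obtain ⟨v, -, hv⟩ := univ.exists_min_image (fun a => #{T ∈ B | a ∈ T}) univ_nonempty
  exact ⟨v, le_sum_card fun a => hv a (mem_univ a)⟩

theorem three_mul_choose_three_lt {n : ℕ} (hn : 2 ≤ n) : 3 * n.choose 3 < n * n.choose 2 := by
  have h := Nat.choose_succ_right_eq n 2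
  have hpos := Nat.choose_pos hn
  rw [mul_comm 3, h, mul_comm n]
  exact Nat.mul_lt_mul_of_pos_left (by omega) hpos

end

/-- If a stochastic tournament `p` has at most `ε * C(n, 3)` unbalanced
unordered triangles, then there is a reversible stochastic tournament `p'`
differing from `p` on strictly fewer than `ε * C(n, 2)` unordered pairs. -/
theorem few_unbalanced_implies_close_to_reversible {V : Type*} [Fintype V] [DecidableEq V]
    (p : V → V → ℝ)
    (hp : ∀ x y : V, x ≠ y → 0 < p x y ∧ p x y < 1 ∧ p x y + p y x = 1)
    (n : ℕ) (hn : Fintype.card V = n) (hn3 : 3 ≤ n)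
    (ε : ℝ) (hε : 0 < ε)
    (hfew : ({T : Finset V | ∃ x y z : V, x ≠ y ∧ x ≠ z ∧ y ≠ z ∧
        T = {x, y, z} ∧
        p x y * p y z * p z x ≠ p x z * p z y * p y x}.ncard : ℝ) ≤
      ε * (n.choose 3 : ℝ)) :
    ∃ p' : V → V → ℝ,
      (∀ x y : V, x ≠ y → 0 < p' x y ∧ p' x y < 1 ∧ p' x y + p' y x = 1) ∧
      (∃ π : V → ℝ, (∀ x, 0 < π x) ∧ (∑ x, π x) = 1 ∧
        ∀ x y : V, x ≠ y → π x * p' x y = π y * p' y x) ∧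
      ({e : Finset V | ∃ x y : V, x ≠ y ∧ e = {x, y} ∧
        p' x y ≠ p x y}.ncard : ℝ) < ε * (n.choose 2 : ℝ) := by
  have : Nonempty V := Fintype.card_pos_iff.mp (by omega)
  obtain ⟨v, hv⟩ := exists_card_mul_card_filter_mem_le (unbalancedTriangles p)
  have hπ := starWeights_pos hp v
  refine ⟨_, isStochasticTournament_bradleyTerry hπ, isReversible_bradleyTerry hπ, ?_⟩
  have hU : {T : Finset V | ∃ x y z : V, x ≠ y ∧ x ≠ z ∧ y ≠ z ∧ T = {x, y, z} ∧
      p x y * p y z * p z x ≠ p x z * p z y * p y x}.ncard = #(unbalancedTriangles p) := by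
    rw [← Set.ncard_coe_finset]
    congr 1
    ext T
    simp [mem_unbalancedTriangles, IsBalanced]
  rw [sum_congr rfl fun T hT => card_of_mem_unbalancedTriangles hT, sum_const, smul_eq_mul,
    hn] at hv
  have hchoose := three_mul_choose_three_lt (by omega : 2 ≤ n)
  rw [hU] at hfew
  have hnpos : (0 : ℝ) < n := by exact_mod_cast (by omega : 0 < n)
  refine lt_of_mul_lt_mul_left ?_ hnpos.le
  calc (n : ℝ) * _ ≤ n * #{T ∈ unbalancedTriangles p | v ∈ T} := by
        gcongr; exact_mod_cast ncard_bradleyTerry_starWeights_ne_le hp v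
    _ ≤ 3 * #(unbalancedTriangles p) := by rw [mul_comm 3]; exact_mod_cast hv
    _ ≤ ε * (3 * n.choose 3) := by linarith
    _ < ε * (n * n.choose 2) := mul_lt_mul_of_pos_left (by exact_mod_cast hchoose) hε
    _ = n * (ε * n.choose 2) := by ring
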